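/- arXiv:1611.02336 — 6 statements merged into one kernel-verified Lean document; each statement's English description precedes it below -/
import Mathlib

section
/- Let f : ℝ₊ᴷ → ℝ₊ᴷ be a standard interference function, i.e., f(λ) > 0 componentwise for all λ ≥ 0, f is monotone (λ ≤ μ implies f(λ) ≤ f(μ) componentwise), and f is scalable (for all α > 1, α f(λ) > f(αλ) componentwise). Then f has at most one fixed point. -/
lemma fixed_le {K : ℕ} (f : (Fin K → ℝ) → (Fin K → ℝ))
    (hpos : ∀ lam, 0 ≤ lam → ∀ i, 0 < f lam i)
    (hmono : ∀ lam mu, 0 ≤ lam → 0 ≤ mu → lam ≤ mu → f lam ≤ f mu)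
    (hscale : ∀ lam, 0 ≤ lam → ∀ α : ℝ, 1 < α → ∀ i, f (α • lam) i < α * f lam i)
    (lam mu : Fin K → ℝ) (hlam : 0 ≤ lam) (hmu : 0 ≤ mu)
    (hflam : f lam = lam) (hfmu : f mu = mu) : lam ≤ mu := by
  by_contra hcon
  rw [Pi.le_def] at hcon
  push_neg at hcon
  obtain ⟨j, hj⟩ := hcon
  have hmupos : ∀ i, 0 < mu i := fun i => hfmu ▸ hpos mu hmu i
  have hne : (Finset.univ : Finset (Fin K)).Nonempty := ⟨j, Finset.mem_univ j⟩
  set α := Finset.univ.sup' hne (fun i => lam i / mu i) with hα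
  have hαgt : 1 < α := by
    have : lam j / mu j ≤ α := Finset.le_sup' (fun i => lam i / mu i) (Finset.mem_univ j)
    have h1 : 1 < lam j / mu j := (one_lt_div (hmupos j)).mpr hj
    linarith
  have hle : lam ≤ α • mu := by
    intro i
    have h1 : lam i / mu i ≤ α := Finset.le_sup' (fun i => lam i / mu i) (Finset.mem_univ i)
    have := (div_le_iff₀ (hmupos i)).mp h1
    simpa [Pi.smul_apply, smul_eq_mul] using this
  have hαmu : 0 ≤ α • mu := fun i => by
    have := (hmupos i).le
    have hα0 : 0 ≤ α := by linarith
    simpa [Pi.smul_apply, smul_eq_mul] using mul_nonneg hα0 this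
  have hstrict : ∀ i, lam i < α * mu i := by
    intro i
    calc lam i = f lam i := by rw [hflam]
      _ ≤ f (α • mu) i := hmono lam (α • mu) hlam hαmu hle i
      _ < α * f mu i := hscale mu hmu α hαgt i
      _ = α * mu i := by rw [hfmu]
  obtain ⟨i, -, hi⟩ := Finset.exists_mem_eq_sup' hne (fun i => lam i / mu i)
  have : lam i = α * mu i := by
    field_simp [hα] at hi ⊢
    rw [eq_comm] at hi
    rw [div_eq_iff (hmupos i).ne'] at hi
    linarith [hi]
  linarith [hstrict i]

/-- A standard interference function (positive, monotone, scalable)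
has at most one fixed point on the nonnegative orthant. -/
theorem stmt_2 {K : ℕ} (f : (Fin K → ℝ) → (Fin K → ℝ))
    (hpos : ∀ lam, 0 ≤ lam → ∀ i, 0 < f lam i)
    (hmono : ∀ lam mu, 0 ≤ lam → 0 ≤ mu → lam ≤ mu → f lam ≤ f mu)
    (hscale : ∀ lam, 0 ≤ lam → ∀ α : ℝ, 1 < α → ∀ i, f (α • lam) i < α * f lam i)
    (lam mu : Fin K → ℝ) (hlam : 0 ≤ lam) (hmu : 0 ≤ mu)
    (hflam : f lam = lam) (hfmu : f mu = mu) : lam = mu := by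
  exact le_antisymm
    (fixed_le f hpos hmono hscale lam mu hlam hmu hflam hfmu)
    (fixed_le f hpos hmono hscale mu lam hmu hlam hfmu hflam)
end

section
/- If f and g are standard interference functions from ℝ₊ᴷ to ℝ₊ᴷ (positive, monotone, and scalable), then their componentwise pointwise minimum h(λ)ᵢ = min(f(λ)ᵢ, g(λ)ᵢ) is also a standard interference function. -/
/-- The componentwise minimum of two standard interference functions is
again a standard interference function. -/
theorem stmt_3 {K : ℕ} (f g : (Fin K → ℝ) → (Fin K → ℝ))
    (hfpos : ∀ lam, 0 ≤ lam → ∀ i, 0 < f lam i)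
    (hfmono : ∀ lam mu, 0 ≤ lam → 0 ≤ mu → lam ≤ mu → f lam ≤ f mu)
    (hfscale : ∀ lam, 0 ≤ lam → ∀ α : ℝ, 1 < α → ∀ i, f (α • lam) i < α * f lam i)
    (hgpos : ∀ lam, 0 ≤ lam → ∀ i, 0 < g lam i)
    (hgmono : ∀ lam mu, 0 ≤ lam → 0 ≤ mu → lam ≤ mu → g lam ≤ g mu)
    (hgscale : ∀ lam, 0 ≤ lam → ∀ α : ℝ, 1 < α → ∀ i, g (α • lam) i < α * g lam i)
    (h : (Fin K → ℝ) → (Fin K → ℝ))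
    (hdef : ∀ lam i, h lam i = min (f lam i) (g lam i)) :
    (∀ lam, 0 ≤ lam → ∀ i, 0 < h lam i) ∧
    (∀ lam mu, 0 ≤ lam → 0 ≤ mu → lam ≤ mu → h lam ≤ h mu) ∧
    (∀ lam, 0 ≤ lam → ∀ α : ℝ, 1 < α → ∀ i, h (α • lam) i < α * h lam i) := by
  refine ⟨?_, ?_, ?_⟩
  · intro lam hlam i
    rw [hdef]
    exact lt_min (hfpos lam hlam i) (hgpos lam hlam i)
  · intro lam mu hl hm hle i
    rw [hdef, hdef]
    exact min_le_min (hfmono lam mu hl hm hle i) (hgmono lam mu hl hm hle i)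
  · intro lam hlam α hα i
    rw [hdef, hdef]
    have := hfscale lam hlam α hα i
    have := hgscale lam hlam α hα i
    rcases min_le_iff.mp (le_refl (min (f (α • lam) i) (g (α • lam) i))) with h1 | h1
    all_goals
      rw [mul_min_of_nonneg _ _ (by linarith : (0:ℝ) ≤ α)]
      exact lt_min_iff.mpr ⟨lt_of_le_of_lt (min_le_left _ _) ‹_›,
        lt_of_le_of_lt (min_le_right _ _) ‹_›⟩
end

section
/- Let f be a standard interference function on ℝ₊ᴷ with a fixed point λ*. Then the iteration λ⁽ⁿ⁺¹⁾ = f(λ⁽ⁿ⁾) started from λ⁽⁰⁾ = 0 produces a componentwise nondecreasing sequence that converges to λ*. -/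
/-!
The iterates `f^[n] 0` stay in the nonnegative cone, increase (since `0 ≤ f 0` and `f` is monotone
on the cone) and stay below the fixed point `λ*` (since `0 ≤ λ*`), so they converge to their
supremum `L`, which is positive and satisfies `L ≤ λ*`. Scalability gives `f L ≤ α L` for every
`α > 1` (eventually `L ≤ α f^[n] 0`), hence `f L ≤ L`. Finally a comparison principle, proved
with the largest ratio `α = λ*ᵢ / Lᵢ`, shows that a point with `p ≤ f p` lies below any positive
point with `f q ≤ q`; applied to `λ*` and `L` it gives `λ* ≤ L`.
-/

open Filter Function Set Topology

theorem MonotoneOn.iterate {α : Type*} [Preorder α] {f : α → α} {s : Set α}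
    (hf : MonotoneOn f s) (hs : MapsTo f s s) (n : ℕ) : MonotoneOn f^[n] s := by
  induction n with
  | zero => exact monotoneOn_id
  | succ n ih =>
    rw [iterate_succ]
    exact ih.comp hf hs

theorem MonotoneOn.monotone_iterate_of_le_map {α : Type*} [Preorder α] {f : α → α} {s : Set α}
    (hf : MonotoneOn f s) (hs : MapsTo f s s) {x : α} (hx : x ∈ s) (hfx : x ≤ f x) :
    Monotone fun n => f^[n] x := by
  refine monotone_nat_of_le_succ fun n => ?_
  rw [iterate_succ_apply]
  exact hf.iterate hs n hx (hs hx) hfx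

section InterferenceFunction

variable {ι : Type*} [Finite ι] {f : (ι → ℝ) → (ι → ℝ)}

theorem le_of_le_apply_of_apply_le
    (hmono : ∀ lam mu, 0 ≤ lam → 0 ≤ mu → lam ≤ mu → f lam ≤ f mu)
    (hscale : ∀ lam, 0 ≤ lam → ∀ α : ℝ, 1 < α → ∀ i, f (α • lam) i < α * f lam i)
    {p q : ι → ℝ} (hp : 0 ≤ p) (hq : ∀ i, 0 < q i) (hpf : p ≤ f p) (hfq : f q ≤ q) :
    p ≤ q := by
  by_contra hpq
  obtain ⟨j, hj⟩ : ∃ j, q j < p j := by simpa [Pi.le_def] using hpq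
  have : Nonempty ι := ⟨j⟩
  obtain ⟨i, hi⟩ := Finite.exists_max fun k => p k / q k
  set α := p i / q i
  have hα : 1 < α := ((one_lt_div (hq j)).2 hj).trans_le (hi j)
  have hq0 : 0 ≤ q := fun k => (hq k).le
  have hp_le : p ≤ α • q := fun k => (div_le_iff₀ (hq k)).1 (hi k)
  have : p i < p i := calc
    p i ≤ f p i := hpf i
    _ ≤ f (α • q) i := hmono _ _ hp (smul_nonneg (by linarith) hq0) hp_le i
    _ < α * f q i := hscale q hq0 α hα i
    _ ≤ α * q i := mul_le_mul_of_nonneg_left (hfq i) (by linarith)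
    _ = p i := div_mul_cancel₀ _ (hq i).ne'
  exact lt_irrefl _ this

theorem apply_le_of_tendsto
    (hmono : ∀ lam mu, 0 ≤ lam → 0 ≤ mu → lam ≤ mu → f lam ≤ f mu)
    (hscale : ∀ lam, 0 ≤ lam → ∀ α : ℝ, 1 < α → ∀ i, f (α • lam) i < α * f lam i)
    {x : ℕ → ι → ℝ} {L : ι → ℝ} (hx : Tendsto x atTop (𝓝 L)) (hx0 : ∀ n, 0 ≤ x n)
    (hfx : ∀ n, f (x n) ≤ L) (hL : ∀ i, 0 < L i) : f L ≤ L := by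
  intro i
  have hL0 : 0 ≤ L := fun k => (hL k).le
  have hscaled : ∀ α : ℝ, 1 < α → f L i < α * L i := by
    intro α hα
    have hα0 : 0 < α := by linarith
    have hev : ∀ᶠ n in atTop, L ≤ α • x n := by
      refine eventually_all.2 fun k => ?_
      filter_upwards [(tendsto_pi_nhds.1 hx k).eventually
        (eventually_gt_nhds (div_lt_self (hL k) hα))] with n hn
      exact (div_le_iff₀' hα0).1 hn.le
    obtain ⟨N, hN⟩ := hev.exists
    calc f L i ≤ f (α • x N) i := hmono _ _ hL0 (smul_nonneg hα0.le (hx0 N)) hN i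
      _ < α * f (x N) i := hscale _ (hx0 N) α hα i
      _ ≤ α * L i := mul_le_mul_of_nonneg_left (hfx N i) hα0.le
  have hlim : Tendsto (fun α : ℝ => α * L i) (𝓝[>] 1) (𝓝 (L i)) :=
    ((continuous_mul_const (L i)).tendsto' 1 (L i) (one_mul _)).mono_left nhdsWithin_le_nhds
  exact ge_of_tendsto hlim (eventually_nhdsWithin_of_forall fun α hα => (hscaled α hα).le)

end InterferenceFunction

/-- For a standard interference function with fixed point `lamStar`, the
iteration started from `0` is componentwise nondecreasing and converges to
`lamStar`. -/
theorem stmt_4 {K : ℕ} (f : (Fin K → ℝ) → (Fin K → ℝ))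
    (hpos : ∀ lam, 0 ≤ lam → ∀ i, 0 < f lam i)
    (hmono : ∀ lam mu, 0 ≤ lam → 0 ≤ mu → lam ≤ mu → f lam ≤ f mu)
    (hscale : ∀ lam, 0 ≤ lam → ∀ α : ℝ, 1 < α → ∀ i, f (α • lam) i < α * f lam i)
    (lamStar : Fin K → ℝ) (hstar : 0 ≤ lamStar) (hfix : f lamStar = lamStar) :
    Monotone (fun n => f^[n] 0) ∧
      Filter.Tendsto (fun n => f^[n] (0 : Fin K → ℝ)) Filter.atTop (nhds lamStar) := by
  have hmaps : MapsTo f (Ici 0) (Ici 0) := fun lam hlam i => (hpos lam hlam i).le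
  have hmonoOn : MonotoneOn f (Ici 0) := fun lam hlam mu hmu => hmono lam mu hlam hmu
  have hx_mono : Monotone fun n => f^[n] 0 :=
    hmonoOn.monotone_iterate_of_le_map hmaps self_mem_Ici (hmaps self_mem_Ici)
  have hx_le : ∀ n, f^[n] 0 ≤ lamStar := fun n =>
    iterate_fixed hfix n ▸ hmonoOn.iterate hmaps n self_mem_Ici hstar hstar
  have hbdd : BddAbove (range fun n => f^[n] 0) := ⟨lamStar, forall_mem_range.2 hx_le⟩
  set L := ⨆ n, f^[n] (0 : Fin K → ℝ)
  have hx_tendsto : Tendsto (fun n => f^[n] 0) atTop (𝓝 L) := tendsto_atTop_ciSup hx_mono hbdd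
  have hL_pos : ∀ i, 0 < L i := fun i => (hpos 0 le_rfl i).trans_le (le_ciSup hbdd 1 i)
  have hfL : f L ≤ L := apply_le_of_tendsto hmono hscale hx_tendsto
    (fun n => hmaps.iterate n self_mem_Ici)
    (fun n => iterate_succ_apply' f n 0 ▸ le_ciSup hbdd (n + 1)) hL_pos
  have hL_eq : L = lamStar :=
    le_antisymm (ciSup_le hx_le) (le_of_le_apply_of_apply_le hmono hscale hstar hL_pos hfix.ge hfL)
  exact ⟨hx_mono, hL_eq ▸ hx_tendsto⟩
end

section
/- Let w > 0, γ > 0, λᵢ ≥ 0, and hⱼ ∈ ℂᴹ for j = 1,…,K. Define Σ = Σⱼ λⱼ hⱼ hⱼᴴ + w I (which is positive definite). Then the matrix inequality w I + Σ_{j ≠ i} λⱼ hⱼ hⱼᴴ ⪰ (λᵢ/γ) hᵢ hᵢᴴ holds if and only if λᵢ (1 + 1/γ) · hᵢᴴ Σ⁻¹ hᵢ ≤ 1. -/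
/-!
Since `Σ ≻ 0`, the constraint is a rank-one downdate `Σ - c hᵢhᵢᴴ ⪰ 0` with `c = λᵢ (1 + 1/γ)`.
Writing `c hᵢhᵢᴴ = u uᴴ` with `u = √c hᵢ`, both sides of the equivalence are Schur complements
of the block matrix `[[Σ, u], [uᴴ, 1]]`: eliminating the `1` block gives `Σ - u uᴴ`, eliminating
the `Σ` block gives the scalar `1 - uᴴ Σ⁻¹ u`.
-/

open Matrix ComplexOrder

namespace Matrix

variable {𝕜 n : Type*} [RCLike 𝕜] [Fintype n] [DecidableEq n]

theorem PosDef.posSemidef_sub_vecMulVec_self_star_iff {S : Matrix n n 𝕜} (hS : S.PosDef)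
    (u : n → 𝕜) :
    (S - vecMulVec u (star u)).PosSemidef ↔ RCLike.re (star u ⬝ᵥ S⁻¹ *ᵥ u) ≤ 1 := by
  have := hS.isUnit.invertible
  have : Invertible (1 : Matrix Unit Unit 𝕜) := invertibleOne
  set B := replicateCol Unit u
  have hB : B * Bᴴ = vecMulVec u (star u) := by
    rw [conjTranspose_replicateCol, vecMulVec_eq Unit]
  have hBSB : 1 - Bᴴ * S⁻¹ * B = diagonal fun _ ↦ 1 - star u ⬝ᵥ S⁻¹ *ᵥ u := by
    ext ⟨⟩ ⟨⟩
    rw [Matrix.mul_assoc, ← replicateCol_mulVec, conjTranspose_replicateCol]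
    simp
  calc (S - vecMulVec u (star u)).PosSemidef
      ↔ (S - B * (1 : Matrix Unit Unit 𝕜)⁻¹ * Bᴴ).PosSemidef := by
        rw [inv_one, Matrix.mul_one, hB]
    _ ↔ (fromBlocks S B Bᴴ 1).PosSemidef := (PosDef.fromBlocks₂₂ S B PosDef.one).symm
    _ ↔ (1 - Bᴴ * S⁻¹ * B).PosSemidef := PosDef.fromBlocks₁₁ B 1 hS
    _ ↔ star u ⬝ᵥ S⁻¹ *ᵥ u ≤ 1 := by
      rw [hBSB, posSemidef_diagonal_iff, Unique.forall_iff, sub_nonneg]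
    _ ↔ RCLike.re (star u ⬝ᵥ S⁻¹ *ᵥ u) ≤ 1 := by
      rw [RCLike.le_iff_re_im, hS.inv.isHermitian.im_star_dotProduct_mulVec_self, RCLike.one_re,
        RCLike.one_im]
      exact and_iff_left rfl

theorem PosDef.posSemidef_sub_smul_vecMulVec_self_star_iff {S : Matrix n n 𝕜} (hS : S.PosDef)
    {c : ℝ} (hc : 0 ≤ c) (v : n → 𝕜) :
    (S - c • vecMulVec v (star v)).PosSemidef ↔ c * RCLike.re (star v ⬝ᵥ S⁻¹ *ᵥ v) ≤ 1 := by
  have hsq : star (√c : 𝕜) * √c = c := by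
    rw [RCLike.star_def, RCLike.conj_ofReal, ← RCLike.ofReal_mul, Real.mul_self_sqrt hc]
  have hu : vecMulVec ((√c : 𝕜) • v) (star ((√c : 𝕜) • v)) = c • vecMulVec v (star v) := by
    rw [star_smul, smul_vecMulVec, vecMulVec_smul, smul_smul, mul_comm, hsq,
      RCLike.real_smul_eq_coe_smul (K := 𝕜)]
  rw [← hu, hS.posSemidef_sub_vecMulVec_self_star_iff, star_smul, mulVec_smul, dotProduct_smul,
    smul_dotProduct, smul_smul, mul_comm _ (star _), hsq, smul_eq_mul, RCLike.re_ofReal_mul]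

end Matrix

/-- Equivalence between the SDP dual constraint
`w I + ∑_{j ≠ i} λⱼ hⱼ hⱼᴴ ⪰ (λᵢ/γ) hᵢ hᵢᴴ` and the uplink MMSE-SINR
condition `λᵢ (1 + 1/γ) hᵢᴴ Σ⁻¹ hᵢ ≤ 1`, where `Σ = ∑ⱼ λⱼ hⱼ hⱼᴴ + w I`. -/
theorem stmt_11 {M K : ℕ} (w γ : ℝ) (hw : 0 < w) (hγ : 0 < γ)
    (lam : Fin K → ℝ) (hlam : ∀ j, 0 ≤ lam j)
    (h : Fin K → Fin M → ℂ) (i : Fin K)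
    (S : Matrix (Fin M) (Fin M) ℂ)
    (hS : S = ∑ j, lam j • vecMulVec (h j) (star (h j)) + w • (1 : Matrix (Fin M) (Fin M) ℂ)) :
    ((w • (1 : Matrix (Fin M) (Fin M) ℂ) +
        ∑ j ∈ Finset.univ.erase i, lam j • vecMulVec (h j) (star (h j))) -
      (lam i / γ) • vecMulVec (h i) (star (h i))).PosSemidef ↔
      lam i * (1 + 1 / γ) * (star (h i) ⬝ᵥ S⁻¹ *ᵥ h i).re ≤ 1 := by
  have hSpos : S.PosDef := hS ▸ PosDef.posSemidef_add
    (posSemidef_sum _ fun j _ ↦ (posSemidef_vecMulVec_self_star (h j)).smul (hlam j))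
    (PosDef.one.smul hw)
  have hdowndate : w • (1 : Matrix (Fin M) (Fin M) ℂ) +
        ∑ j ∈ Finset.univ.erase i, lam j • vecMulVec (h j) (star (h j)) -
        (lam i / γ) • vecMulVec (h i) (star (h i)) =
      S - (lam i * (1 + 1 / γ)) • vecMulVec (h i) (star (h i)) := by
    rw [hS, ← Finset.sum_erase_add _ _ (Finset.mem_univ i), mul_one_add, mul_one_div, add_smul]
    abel
  rw [hdowndate]
  exact hSpos.posSemidef_sub_smul_vecMulVec_self_star_iff
    (mul_nonneg (hlam i) (by positivity)) (h i)
end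

section
/- Fix λⱼ ≥ 0 for j ≠ i, h ∈ ℂᴹ with h ≠ 0, γ > 0, w > 0, and let A(t) = w I + Σ_{j≠i} λⱼ hⱼ hⱼᴴ − (t/γ) h hᴴ for t ≥ 0. Then the set {t ≥ 0 : A(t) ⪰ 0} is a closed bounded interval [0, t̄] with t̄ > 0, and A(t̄) is positive semidefinite and singular. -/
/-!
Write `A(t) = B - (t/γ) h hᴴ` with `B = w I + ∑ λⱼ gⱼ gⱼᴴ` positive definite. By the Schur
complement of the block matrix `[[B, h], [hᴴ, γ/t]]`, `A(t) ⪰ 0` iff `t · hᴴB⁻¹h ≤ γ`, so the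
feasible set is `[0, γ / hᴴB⁻¹h]`; and the matrix determinant lemma gives
`det A(t) = det B · (1 - (t/γ) hᴴB⁻¹h)`, which vanishes at the right endpoint.
-/

open Matrix ComplexOrder

namespace Matrix

variable {n 𝕜 α : Type*} [Fintype n] [DecidableEq n] [RCLike 𝕜] [CommRing α]

theorem det_sub_smul_vecMulVec {B : Matrix n n α} (hB : IsUnit B.det) (s : α) (u w : n → α) :
    (B - s • vecMulVec u w).det = B.det * (1 - s * (w ⬝ᵥ B⁻¹ *ᵥ u)) := by
  rw [sub_eq_add_neg, ← neg_smul, vecMulVec_eq Unit, ← Matrix.smul_mul, ← replicateCol_smul,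
    det_add_replicateCol_mul_replicateRow hB, det_unique (1 + _)]
  simp [← replicateCol_mulVec, ← mulVec_mulVec, replicateRow_mulVec_eq_const, mulVec_neg,
    mulVec_smul, sub_eq_add_neg]

theorem PosDef.posSemidef_sub_smul_vecMulVec_iff {B : Matrix n n 𝕜} (hB : B.PosDef) (v : n → 𝕜)
    (s : ℝ) :
    (B - s • vecMulVec v (star v)).PosSemidef ↔ s * RCLike.re (star v ⬝ᵥ B⁻¹ *ᵥ v) ≤ 1 := by
  obtain ⟨c, hc, hvc⟩ :=
    RCLike.nonneg_iff_exists_ofReal.mp (hB.inv.posSemidef.dotProduct_mulVec_nonneg v)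
  rw [← hvc, RCLike.ofReal_re]
  rcases le_or_gt s 0 with hs | hs
  · refine iff_of_true ?_ ((mul_nonpos_of_nonpos_of_nonneg hs hc).trans zero_le_one)
    rw [sub_eq_add_neg, ← neg_smul]
    exact hB.posSemidef.add ((posSemidef_vecMulVec_self_star v).smul (neg_nonneg.mpr hs))
  -- `B - C D⁻¹ Cᴴ` and `D - Cᴴ B⁻¹ C` are the two Schur complements of `fromBlocks B C Cᴴ D`.
  set C := replicateCol Unit v
  set D : Matrix Unit Unit 𝕜 := diagonal fun _ => ((s⁻¹ : ℝ) : 𝕜)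
  have hD : D.PosDef := posDef_diagonal_iff.mpr fun _ => RCLike.ofReal_pos.mpr (inv_pos.mpr hs)
  have : Invertible B := hB.isUnit.invertible
  have : Invertible D := hD.isUnit.invertible
  have hDinv : D⁻¹ = diagonal fun _ => (s : 𝕜) := inv_eq_left_inv <| by
    rw [diagonal_mul_diagonal]
    ext
    simp [hs.ne']
  have hCDC : C * D⁻¹ * Cᴴ = s • vecMulVec v (star v) := by
    ext i j
    simp [C, hDinv, mul_apply, vecMulVec_apply, RCLike.real_smul_eq_coe_mul]
    ring
  have hDCC : D - Cᴴ * B⁻¹ * C = diagonal fun _ => ((s⁻¹ - c : ℝ) : 𝕜) := by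
    ext
    simp [C, D, hvc, conjTranspose_replicateCol, ← replicateCol_mulVec, ← mulVec_mulVec,
      replicateRow_mulVec_eq_const]
  rw [← hCDC, ← PosDef.fromBlocks₂₂ B C hD, PosDef.fromBlocks₁₁ C D hB, hDCC,
    posSemidef_diagonal_iff]
  simp only [RCLike.ofReal_nonneg, forall_const, sub_nonneg]
  rw [← le_div_iff₀' hs, one_div]

end Matrix

/-- For `A(t) = w I + ∑_{j≠i} λⱼ hⱼ hⱼᴴ − (t/γ) h hᴴ` with `h ≠ 0`, the set
`{t ≥ 0 : A(t) ⪰ 0}` is a closed bounded interval `[0, t̄]` with `t̄ > 0`, and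
`A(t̄)` is positive semidefinite and singular. -/
theorem stmt_13 {M K : ℕ} (w γ : ℝ) (hw : 0 < w) (hγ : 0 < γ)
    (lam : Fin K → ℝ) (hlam : ∀ j, 0 ≤ lam j)
    (g : Fin K → Fin M → ℂ) (h : Fin M → ℂ) (hh : h ≠ 0)
    (A : ℝ → Matrix (Fin M) (Fin M) ℂ)
    (hA : ∀ t : ℝ, A t = w • (1 : Matrix (Fin M) (Fin M) ℂ) +
        ∑ j, lam j • vecMulVec (g j) (star (g j)) - (t / γ) • vecMulVec h (star h)) :
    ∃ tbar : ℝ, 0 < tbar ∧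
      {t : ℝ | 0 ≤ t ∧ (A t).PosSemidef} = Set.Icc 0 tbar ∧
      (A tbar).PosSemidef ∧ (A tbar).det = 0 := by
  set B : Matrix (Fin M) (Fin M) ℂ := w • 1 + ∑ j, lam j • vecMulVec (g j) (star (g j))
  have hB : B.PosDef := (PosDef.one.smul hw).add_posSemidef <|
    posSemidef_sum _ fun j _ => (posSemidef_vecMulVec_self_star (g j)).smul (hlam j)
  obtain ⟨c, hc, hhc⟩ := RCLike.pos_iff_exists_ofReal.mp (hB.inv.dotProduct_mulVec_pos hh)
  have hpsd (t : ℝ) : (A t).PosSemidef ↔ t ≤ γ / c := by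
    rw [hA, hB.posSemidef_sub_smul_vecMulVec_iff, ← hhc, RCLike.ofReal_re, le_div_iff₀ hc,
      div_mul_eq_mul_div, div_le_one hγ]
  refine ⟨γ / c, div_pos hγ hc, ?_, (hpsd _).2 le_rfl, ?_⟩
  · ext t
    exact and_congr_right' (hpsd t)
  · rw [hA, ← Complex.coe_smul, det_sub_smul_vecMulVec ((isUnit_iff_isUnit_det B).mp hB.isUnit),
      ← hhc, div_div_cancel_left' hγ.ne']
    simp [hc.ne']
end

section
/- Let f : ℝ₊ᴷ → ℝ₊ᴷ be a standard interference function with fixed point λ*. If μ ∈ ℝ₊ᴷ satisfies μ ≥ f(μ) componentwise, then μ ≥ λ* componentwise; i.e., the fixed point is the minimal feasible power vector among all vectors satisfying the interference constraints μ ≥ f(μ). -/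
/-- The fixed point of a standard interference function is the minimal
feasible power vector: any `μ` with `μ ≥ f(μ)` satisfies `μ ≥ λ*`. -/
theorem stmt_14 {K : ℕ} (f : (Fin K → ℝ) → (Fin K → ℝ))
    (hpos : ∀ lam, 0 ≤ lam → ∀ i, 0 < f lam i)
    (hmono : ∀ lam mu, 0 ≤ lam → 0 ≤ mu → lam ≤ mu → f lam ≤ f mu)
    (hscale : ∀ lam, 0 ≤ lam → ∀ α : ℝ, 1 < α → ∀ i, f (α • lam) i < α * f lam i)
    (lamStar : Fin K → ℝ) (hstar : 0 ≤ lamStar) (hfix : f lamStar = lamStar)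
    (mu : Fin K → ℝ) (hmu : 0 ≤ mu) (hfeas : f mu ≤ mu) : lamStar ≤ mu := by
  intro i
  have hne : (Finset.univ : Finset (Fin K)).Nonempty := ⟨i, Finset.mem_univ i⟩
  have hmupos : ∀ k, 0 < mu k := fun k => lt_of_lt_of_le (hpos mu hmu k) (hfeas k)
  set α := Finset.univ.sup' hne (fun k => lamStar k / mu k) with hαdef
  obtain ⟨j, -, hj⟩ := Finset.exists_mem_eq_sup' hne (fun k => lamStar k / mu k)
  have hle : ∀ k, lamStar k ≤ α * mu k := by
    intro k
    have h := Finset.le_sup' (fun k => lamStar k / mu k) (Finset.mem_univ k)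
    rw [div_le_iff₀ (hmupos k)] at h
    exact h
  have hα1 : α ≤ 1 := by
    by_contra h
    push_neg at h
    have hα0 : (0:ℝ) < α := by linarith
    have hαmu : (0:Fin K → ℝ) ≤ α • mu := fun k => by
      have := (hmupos k).le
      simp only [Pi.smul_apply, smul_eq_mul, Pi.zero_apply]
      positivity
    have h1 : lamStar ≤ α • mu := fun k => by
      simpa [Pi.smul_apply, smul_eq_mul] using hle k
    have h2 : f lamStar j ≤ f (α • mu) j := hmono lamStar (α • mu) hstar hαmu h1 j
    have h3 : f (α • mu) j < α * f mu j := hscale mu hmu α h j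
    have h4 : α * f mu j ≤ α * mu j := by
      have := hfeas j
      nlinarith
    have h5 : lamStar j = α * mu j := by
      have hjj : lamStar j / mu j = α := hj.symm
      rw [div_eq_iff (hmupos j).ne'] at hjj
      linarith [hjj]
    rw [hfix] at h2
    linarith
  calc lamStar i ≤ α * mu i := hle i
    _ ≤ 1 * mu i := by nlinarith [hmupos i]
    _ = mu i := one_mul _
end
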